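/- Let w be a permutation of {1,…,n} fixed under quarter-turn (90°) rotation of its permutation matrix. Then for every j ∈ {1,…,n}, the entry of w at position j is a right-to-left maximum of w if and only if the entry of w at position w⁻¹(j) (i.e., the value j itself) is a left-to-right maximum of w. -/

import Mathlib

/-- The entry of the word `l` at (1-indexed) position `i`, i.e. `w(i)`. -/
def entry (l : List ℕ) (i : ℕ) : ℕ := l.getD (i - 1) 0

/-- `l` is the one-line notation of a permutation of `{1,…,n}`. -/
def IsPermWord (n : ℕ) (l : List ℕ) : Prop := l.Perm (List.range' 1 n)

/-- `l` is a Baxter permutation of length `n`: a permutation of `{1,…,n}`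
avoiding the vincular patterns 3-14-2 and 2-41-3. -/
def IsBaxter (n : ℕ) (l : List ℕ) : Prop :=
  IsPermWord n l ∧
  (¬ ∃ i j k, 1 ≤ i ∧ i < j ∧ j + 1 < k ∧ k ≤ n ∧
      entry l j < entry l k ∧ entry l k < entry l i ∧ entry l i < entry l (j + 1)) ∧
  (¬ ∃ i j k, 1 ≤ i ∧ i < j ∧ j + 1 < k ∧ k ≤ n ∧
      entry l (j + 1) < entry l i ∧ entry l i < entry l k ∧ entry l k < entry l j)

/-- `l` is fixed under quarter-turn (90°) rotation of its permutation matrix: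
`w(w(i)) = n+1-i` for all `i ∈ {1,…,n}`. -/
def QuarterFixed (n : ℕ) (l : List ℕ) : Prop :=
  ∀ i, 1 ≤ i → i ≤ n → entry l (entry l i) = n + 1 - i

/-- `l` is fixed under half-turn (180°) rotation of its permutation matrix:
`w(n+1-i) = n+1-w(i)` for all `i ∈ {1,…,n}`. -/
def HalfFixed (n : ℕ) (l : List ℕ) : Prop :=
  ∀ i, 1 ≤ i → i ≤ n → entry l (n + 1 - i) = n + 1 - entry l i

/-- The entry at position `i` is a left-to-right maximum. -/
def LRMaxAt (l : List ℕ) (i : ℕ) : Prop := ∀ k, 1 ≤ k → k < i → entry l k < entry l i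

/-- The entry at position `i` is a right-to-left maximum. -/
def RLMaxAt (n : ℕ) (l : List ℕ) (i : ℕ) : Prop := ∀ k, i < k → k ≤ n → entry l k < entry l i

/-- The entry at position `i` is a left-to-right minimum. -/
def LRMinAt (l : List ℕ) (i : ℕ) : Prop := ∀ k, 1 ≤ k → k < i → entry l i < entry l k

/-- The entry at position `i` is a right-to-left minimum. -/
def RLMinAt (n : ℕ) (l : List ℕ) (i : ℕ) : Prop := ∀ k, i < k → k ≤ n → entry l i < entry l k

/-- The (1-indexed) position of the value `v` in `l`, i.e. `w⁻¹(v)`. -/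
def pos (l : List ℕ) (v : ℕ) : ℕ := l.idxOf v + 1

/-- The one-line notation of the inverse of the permutation `l` of `{1,…,n}`. -/
def invWord (n : ℕ) (l : List ℕ) : List ℕ := (List.range' 1 n).map (pos l)

/-- The number of descents of a permutation word of length `n`:
indices `i ∈ {1,…,n-1}` with `w(i) > w(i+1)`. -/
noncomputable def des (n : ℕ) (l : List ℕ) : ℕ :=
  {i : ℕ | 1 ≤ i ∧ i + 1 ≤ n ∧ entry l (i + 1) < entry l i}.ncard

/-- Insert a new largest label `n+1` at (1-indexed) position `p`
in the permutation `l` of `{1,…,n}`. -/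
def insertMax (n p : ℕ) (l : List ℕ) : List ℕ := l.insertIdx (p - 1) (n + 1)

/-- Insert a new smallest label `1` at (1-indexed) position `p`
(all old labels get increased by 1). -/
def insertMin (p : ℕ) (l : List ℕ) : List ℕ := (l.map (· + 1)).insertIdx (p - 1) 1

/-- Append the value `j` at the end of the permutation `l`
(old labels `≥ j` get increased by 1). -/
def appendEnd (j : ℕ) (l : List ℕ) : List ℕ :=
  (l.map (fun x => if x < j then x else x + 1)) ++ [j]

/-- Standardize a word with distinct entries: replace the entries by `1,…,m` preserving
relative order (each entry is replaced by the number of entries less than or equal to it). -/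
def standardize (l : List ℕ) : List ℕ := l.map (fun x => (l.filter (fun y => y ≤ x)).length)


/-! Quarter-turn symmetry says `w² = (i ↦ n + 1 - i)`, so `w⁴ = 1` and
`w⁻¹(k) = w³(k) = n + 1 - w(k)`. In particular `w⁻¹(k) < w⁻¹(j)` iff `w(j) < w(k)`, so writing
the positions before `w⁻¹(j)` as `w⁻¹(k)`, "`j` is a left-to-right maximum" becomes "every `k`
with `w(k) > w(j)` lies before `j`", the contrapositive of "`w(j)` is a right-to-left maximum". -/

namespace IsPermWord

variable {n : ℕ} {l : List ℕ}

theorem length_eq (hl : IsPermWord n l) : l.length = n := by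
  simpa using List.Perm.length_eq hl

theorem mem_iff (hl : IsPermWord n l) {v : ℕ} : v ∈ l ↔ 1 ≤ v ∧ v ≤ n := by
  rw [List.Perm.mem_iff hl, List.mem_range'_1]
  omega

theorem nodup (hl : IsPermWord n l) : l.Nodup :=
  (List.Perm.nodup_iff hl).mpr List.nodup_range'

theorem entry_eq_getElem (hl : IsPermWord n l) {i : ℕ} (hi1 : 1 ≤ i) (hi2 : i ≤ n) :
    entry l i = l[i - 1]'(by rw [hl.length_eq]; omega) :=
  List.getD_eq_getElem l 0 _

theorem entry_mem (hl : IsPermWord n l) {i : ℕ} (hi1 : 1 ≤ i) (hi2 : i ≤ n) :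
    1 ≤ entry l i ∧ entry l i ≤ n := by
  rw [← hl.mem_iff, hl.entry_eq_getElem hi1 hi2]
  exact List.getElem_mem _

theorem entry_injOn (hl : IsPermWord n l) {i k : ℕ} (hi1 : 1 ≤ i) (hi2 : i ≤ n)
    (hk1 : 1 ≤ k) (hk2 : k ≤ n) (h : entry l i = entry l k) : i = k := by
  rw [hl.entry_eq_getElem hi1 hi2, hl.entry_eq_getElem hk1 hk2,
    hl.nodup.getElem_inj_iff] at h
  omega

theorem pos_entry (hl : IsPermWord n l) {i : ℕ} (hi1 : 1 ≤ i) (hi2 : i ≤ n) :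
    pos l (entry l i) = i := by
  rw [pos, hl.entry_eq_getElem hi1 hi2, hl.nodup.idxOf_getElem]
  omega

theorem entry_pos (hl : IsPermWord n l) {v : ℕ} (hv1 : 1 ≤ v) (hv2 : v ≤ n) :
    entry l (pos l v) = v := by
  have hlt : l.idxOf v < l.length := List.idxOf_lt_length_iff.mpr (hl.mem_iff.mpr ⟨hv1, hv2⟩)
  rw [entry, pos, Nat.add_sub_cancel, List.getD_eq_getElem l 0 hlt, List.getElem_idxOf]

theorem pos_mem (hl : IsPermWord n l) {v : ℕ} (hv1 : 1 ≤ v) (hv2 : v ≤ n) :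
    1 ≤ pos l v ∧ pos l v ≤ n := by
  have hlt : l.idxOf v < l.length := List.idxOf_lt_length_iff.mpr (hl.mem_iff.mpr ⟨hv1, hv2⟩)
  rw [hl.length_eq] at hlt
  exact ⟨Nat.le_add_left 1 _, hlt⟩

theorem rlMaxAt_iff (hl : IsPermWord n l) {j : ℕ} (hj1 : 1 ≤ j) (hj2 : j ≤ n) :
    RLMaxAt n l j ↔ ∀ k, 1 ≤ k → k ≤ n → entry l j < entry l k → k < j := by
  refine ⟨fun h k hk1 hk2 hlt => ?_, fun h k hjk hkn => ?_⟩
  · by_contra! hjk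
    rcases hjk.lt_or_eq with hjk | rfl
    · exact (h k hjk hk2).asymm hlt
    · exact hlt.false
  · have hne : entry l k ≠ entry l j := fun he => by
      have := hl.entry_injOn (by omega) hkn hj1 hj2 he
      omega
    by_contra! hle
    exact (h k (by omega) hkn (lt_of_le_of_ne hle hne.symm)).not_gt hjk

theorem lrMaxAt_pos_iff (hl : IsPermWord n l) {v : ℕ} (hv1 : 1 ≤ v) (hv2 : v ≤ n) :
    LRMaxAt l (pos l v) ↔ ∀ u, 1 ≤ u → u ≤ n → pos l u < pos l v → u < v := by
  refine ⟨fun h u hu1 hu2 hlt => ?_, fun h i hi1 hilt => ?_⟩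
  · have := h (pos l u) (hl.pos_mem hu1 hu2).1 hlt
    rwa [hl.entry_pos hu1 hu2, hl.entry_pos hv1 hv2] at this
  · have hi2 : i ≤ n := by have := hl.pos_mem hv1 hv2; omega
    obtain ⟨hw1, hw2⟩ := hl.entry_mem hi1 hi2
    rw [hl.entry_pos hv1 hv2]
    exact h _ hw1 hw2 (by rwa [hl.pos_entry hi1 hi2])

end IsPermWord

namespace QuarterFixed

variable {n : ℕ} {l : List ℕ}

theorem entry_add_one_sub_entry (hf : QuarterFixed n l) (hl : IsPermWord n l) {k : ℕ}
    (hk1 : 1 ≤ k) (hk2 : k ≤ n) : entry l (n + 1 - entry l k) = k := by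
  obtain ⟨hw1, hw2⟩ := hl.entry_mem hk1 hk2
  calc entry l (n + 1 - entry l k)
      = entry l (entry l (entry l (entry l k))) := by rw [hf _ hw1 hw2]
    _ = entry l (entry l (n + 1 - k)) := by rw [hf k hk1 hk2]
    _ = k := by rw [hf _ (by omega) (by omega)]; omega

theorem pos_eq (hf : QuarterFixed n l) (hl : IsPermWord n l) {k : ℕ}
    (hk1 : 1 ≤ k) (hk2 : k ≤ n) : pos l k = n + 1 - entry l k := by
  obtain ⟨hw1, hw2⟩ := hl.entry_mem hk1 hk2
  conv_lhs => rw [← hf.entry_add_one_sub_entry hl hk1 hk2]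
  exact hl.pos_entry (by omega) (by omega)

end QuarterFixed

/-- For a permutation fixed under quarter-turn rotation, the entry at position
`j` is a right-to-left maximum iff the entry at position `w⁻¹(j)` (the value `j` itself) is
a left-to-right maximum. -/
theorem quarterFixed_rlmax_iff_lrmax (n : ℕ) (l : List ℕ)
    (hl : IsPermWord n l) (hf : QuarterFixed n l) :
    ∀ j, 1 ≤ j → j ≤ n → (RLMaxAt n l j ↔ LRMaxAt l (pos l j)) := by
  intro j hj1 hj2
  rw [hl.rlMaxAt_iff hj1 hj2, hl.lrMaxAt_pos_iff hj1 hj2]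
  refine forall_congr' fun k => forall_congr' fun hk1 => forall_congr' fun hk2 => ?_
  have hwj := hl.entry_mem hj1 hj2
  have hwk := hl.entry_mem hk1 hk2
  rw [hf.pos_eq hl hk1 hk2, hf.pos_eq hl hj1 hj2]
  omega
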